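/- Let M ⊂ ℝ⁴ be parametrized by x(u,v) = α(u) + β(v) where α(u) = (α₁(u), α₂(u), 0, 0) and β(v) = (0, 0, β₁(v), β₂(v)) are unit-speed plane curves with nonvanishing curvatures κ_α(u) and κ_β(v), Frenet normals n_α(u) and n_β(v). Define x̃(u,v) = x(u,v) + (1/κ_α(u))·n_α(u) + (1/κ_β(v))·n_β(v). Then x̃_u = (1/κ_α)'·n_α and x̃_v = (1/κ_β)'·n_β, and consequently ⟨x̃_u, x_u⟩ = ⟨x̃_u, x_v⟩ = ⟨x̃_v, x_u⟩ = ⟨x̃_v, x_v⟩ = 0. -/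

import Mathlib

/-!
The Frenet equation `n' = -κ t` makes the tangential terms cancel when differentiating the
evolute of a plane curve: `(γ + κ⁻¹ n)' = t + (κ⁻¹)' n - κ⁻¹ κ t = (κ⁻¹)' n`. Applied to each
translation curve, `x̃_u` is a multiple of `n_α` and `x̃_v` a multiple of `n_β`. Now `x_u = t_α`
and `x_v = t_β`; `n_α ⊥ t_α` and `n_β ⊥ t_β` by orthonormality of the Frenet frames, while
`n_α ⊥ t_β` and `n_β ⊥ t_α` because the two curves lie in complementary coordinate planes.
-/

section

variable {𝕜 : Type*} [NontriviallyNormedField 𝕜] {F : Type*} [NormedAddCommGroup F]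
  [NormedSpace 𝕜 F]

theorem HasDerivAt.vecCons {n : ℕ} {f : 𝕜 → F} {fs : 𝕜 → Fin n → F} {d : F} {ds : Fin n → F}
    {s : 𝕜} (h : HasDerivAt f d s) (hs : HasDerivAt fs ds s) :
    HasDerivAt (fun s => Matrix.vecCons (f s) (fs s)) (Matrix.vecCons d ds) s :=
  h.finCons hs

theorem hasDerivAt_vecEmpty (s : 𝕜) : HasDerivAt (fun _ => (![] : Fin 0 → F)) ![] s := by
  simpa [Subsingleton.elim (0 : Fin 0 → F) ![]] using hasDerivAt_const s (![] : Fin 0 → F)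

theorem hasDerivAt_vec4 {f₁ f₂ f₃ f₄ : 𝕜 → F} {d₁ d₂ d₃ d₄ : F} {s : 𝕜}
    (h₁ : HasDerivAt f₁ d₁ s) (h₂ : HasDerivAt f₂ d₂ s)
    (h₃ : HasDerivAt f₃ d₃ s) (h₄ : HasDerivAt f₄ d₄ s) :
    HasDerivAt (fun s => ![f₁ s, f₂ s, f₃ s, f₄ s]) ![d₁, d₂, d₃, d₄] s :=
  h₁.vecCons <| h₂.vecCons <| h₃.vecCons <| h₄.vecCons <| hasDerivAt_vecEmpty s

end

theorem hasDerivAt_add_inv_smul_of_frenet {E : Type*} [NormedAddCommGroup E] [NormedSpace ℝ E]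
    {γ t n : ℝ → E} {κ : ℝ → ℝ} {s : ℝ} (hγ : HasDerivAt γ (t s) s)
    (hn : HasDerivAt n (-(κ s • t s)) s) (hκ : DifferentiableAt ℝ κ s) (hκs : κ s ≠ 0) :
    HasDerivAt (fun s => γ s + (κ s)⁻¹ • n s) (deriv (fun s => (κ s)⁻¹) s • n s) s := by
  have hinv : HasDerivAt (fun s => (κ s)⁻¹) _ s := hκ.hasDerivAt.inv hκs
  rw [hinv.deriv]
  refine (hγ.fun_add (hinv.fun_smul hn)).congr_deriv ?_
  rw [smul_neg, smul_smul, inv_mul_cancel₀ hκs, one_smul]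
  abel

theorem stmt_12_general (α₁ α₂ β₁ β₂ tα1 tα2 nα1 nα2 tβ1 tβ2 nβ1 nβ2 κα κβ : ℝ → ℝ)
    -- unit-speed curves with tangents tα, tβ
    (hα₁ : ∀ u, HasDerivAt α₁ (tα1 u) u) (hα₂ : ∀ u, HasDerivAt α₂ (tα2 u) u)
    (hβ₁ : ∀ v, HasDerivAt β₁ (tβ1 v) v) (hβ₂ : ∀ v, HasDerivAt β₂ (tβ2 v) v)
    -- nonvanishing curvatures, differentiable
    (hκα : ∀ u, κα u ≠ 0) (hκβ : ∀ v, κβ v ≠ 0)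
    (hκαd : Differentiable ℝ κα) (hκβd : Differentiable ℝ κβ)
    -- Frenet equations t' = κ n, n' = −κ t
    (hnα1 : ∀ u, HasDerivAt nα1 (-(κα u * tα1 u)) u)
    (hnα2 : ∀ u, HasDerivAt nα2 (-(κα u * tα2 u)) u)
    (hnβ1 : ∀ v, HasDerivAt nβ1 (-(κβ v * tβ1 v)) v)
    (hnβ2 : ∀ v, HasDerivAt nβ2 (-(κβ v * tβ2 v)) v)
    -- Frenet frames are orthonormal
    (hαorth : ∀ u, tα1 u * nα1 u + tα2 u * nα2 u = 0)
    (hβorth : ∀ v, tβ1 v * nβ1 v + tβ2 v * nβ2 v = 0)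
    -- the translation surface and its normal transport surface
    (x xt : ℝ → ℝ → Fin 4 → ℝ)
    (hx : ∀ u v, x u v = ![α₁ u, α₂ u, β₁ v, β₂ v])
    (hxt : ∀ u v, xt u v =
      ![α₁ u + (κα u)⁻¹ * nα1 u, α₂ u + (κα u)⁻¹ * nα2 u,
        β₁ v + (κβ v)⁻¹ * nβ1 v, β₂ v + (κβ v)⁻¹ * nβ2 v]) :
    ∀ u v,
      deriv (fun u' => xt u' v) u =
        deriv (fun u' => (κα u')⁻¹) u • ![nα1 u, nα2 u, 0, 0] ∧
      deriv (fun v' => xt u v') v =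
        deriv (fun v' => (κβ v')⁻¹) v • ![0, 0, nβ1 v, nβ2 v] ∧
      (∑ i : Fin 4, deriv (fun u' => xt u' v) u i * deriv (fun u' => x u' v) u i) = 0 ∧
      (∑ i : Fin 4, deriv (fun u' => xt u' v) u i * deriv (fun v' => x u v') v i) = 0 ∧
      (∑ i : Fin 4, deriv (fun v' => xt u v') v i * deriv (fun u' => x u' v) u i) = 0 ∧
      (∑ i : Fin 4, deriv (fun v' => xt u v') v i * deriv (fun v' => x u v') v i) = 0 := by
  intro u v
  have hconst {c : ℝ} (s : ℝ) : HasDerivAt (fun _ => c) 0 s := hasDerivAt_const s c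
  have hxt_u : HasDerivAt (fun u' => xt u' v)
      (deriv (fun u' => (κα u')⁻¹) u • ![nα1 u, nα2 u, 0, 0]) u := by
    simp only [hxt, Matrix.smul_cons, smul_zero, Matrix.smul_empty]
    exact hasDerivAt_vec4
      (hasDerivAt_add_inv_smul_of_frenet (hα₁ u) (hnα1 u) (hκαd u) (hκα u))
      (hasDerivAt_add_inv_smul_of_frenet (hα₂ u) (hnα2 u) (hκαd u) (hκα u)) (hconst u) (hconst u)
  have hxt_v : HasDerivAt (fun v' => xt u v')
      (deriv (fun v' => (κβ v')⁻¹) v • ![0, 0, nβ1 v, nβ2 v]) v := by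
    simp only [hxt, Matrix.smul_cons, smul_zero, Matrix.smul_empty]
    exact hasDerivAt_vec4 (hconst v) (hconst v)
      (hasDerivAt_add_inv_smul_of_frenet (hβ₁ v) (hnβ1 v) (hκβd v) (hκβ v))
      (hasDerivAt_add_inv_smul_of_frenet (hβ₂ v) (hnβ2 v) (hκβd v) (hκβ v))
  have hx_u : HasDerivAt (fun u' => x u' v) ![tα1 u, tα2 u, 0, 0] u := by
    simp only [hx]
    exact hasDerivAt_vec4 (hα₁ u) (hα₂ u) (hconst u) (hconst u)
  have hx_v : HasDerivAt (fun v' => x u v') ![0, 0, tβ1 v, tβ2 v] v := by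
    simp only [hx]
    exact hasDerivAt_vec4 (hconst v) (hconst v) (hβ₁ v) (hβ₂ v)
  rw [hxt_u.deriv, hxt_v.deriv, hx_u.deriv, hx_v.deriv]
  refine ⟨rfl, rfl, ?_, ?_, ?_, ?_⟩ <;>
    simp only [Fin.sum_univ_four, Pi.smul_apply, smul_eq_mul, Matrix.cons_val]
  · linear_combination deriv (fun u' => (κα u')⁻¹) u * hαorth u
  · ring
  · ring
  · linear_combination deriv (fun v' => (κβ v')⁻¹) v * hβorth v

/-- The evolute-built normal transport surface of a translation surface in ℝ⁴
has tangent planes orthogonal to those of the original surface (Example 2). -/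
theorem stmt_12 (α₁ α₂ β₁ β₂ tα1 tα2 nα1 nα2 tβ1 tβ2 nβ1 nβ2 κα κβ : ℝ → ℝ)
    -- unit-speed curves with tangents tα, tβ
    (hα₁ : ∀ u, HasDerivAt α₁ (tα1 u) u) (hα₂ : ∀ u, HasDerivAt α₂ (tα2 u) u)
    (hβ₁ : ∀ v, HasDerivAt β₁ (tβ1 v) v) (hβ₂ : ∀ v, HasDerivAt β₂ (tβ2 v) v)
    (hαunit : ∀ u, tα1 u ^ 2 + tα2 u ^ 2 = 1)
    (hβunit : ∀ v, tβ1 v ^ 2 + tβ2 v ^ 2 = 1)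
    -- nonvanishing curvatures, differentiable
    (hκα : ∀ u, κα u ≠ 0) (hκβ : ∀ v, κβ v ≠ 0)
    (hκαd : Differentiable ℝ κα) (hκβd : Differentiable ℝ κβ)
    -- Frenet equations t' = κ n, n' = −κ t
    (htα1 : ∀ u, HasDerivAt tα1 (κα u * nα1 u) u)
    (htα2 : ∀ u, HasDerivAt tα2 (κα u * nα2 u) u)
    (hnα1 : ∀ u, HasDerivAt nα1 (-(κα u * tα1 u)) u)
    (hnα2 : ∀ u, HasDerivAt nα2 (-(κα u * tα2 u)) u)
    (htβ1 : ∀ v, HasDerivAt tβ1 (κβ v * nβ1 v) v)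
    (htβ2 : ∀ v, HasDerivAt tβ2 (κβ v * nβ2 v) v)
    (hnβ1 : ∀ v, HasDerivAt nβ1 (-(κβ v * tβ1 v)) v)
    (hnβ2 : ∀ v, HasDerivAt nβ2 (-(κβ v * tβ2 v)) v)
    -- Frenet frames are orthonormal
    (hαorth : ∀ u, tα1 u * nα1 u + tα2 u * nα2 u = 0)
    (hβorth : ∀ v, tβ1 v * nβ1 v + tβ2 v * nβ2 v = 0)
    -- the translation surface and its normal transport surface
    (x xt : ℝ → ℝ → Fin 4 → ℝ)
    (hx : ∀ u v, x u v = ![α₁ u, α₂ u, β₁ v, β₂ v])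
    (hxt : ∀ u v, xt u v =
      ![α₁ u + (κα u)⁻¹ * nα1 u, α₂ u + (κα u)⁻¹ * nα2 u,
        β₁ v + (κβ v)⁻¹ * nβ1 v, β₂ v + (κβ v)⁻¹ * nβ2 v]) :
    ∀ u v,
      deriv (fun u' => xt u' v) u =
        deriv (fun u' => (κα u')⁻¹) u • ![nα1 u, nα2 u, 0, 0] ∧
      deriv (fun v' => xt u v') v =
        deriv (fun v' => (κβ v')⁻¹) v • ![0, 0, nβ1 v, nβ2 v] ∧
      (∑ i : Fin 4, deriv (fun u' => xt u' v) u i * deriv (fun u' => x u' v) u i) = 0 ∧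
      (∑ i : Fin 4, deriv (fun u' => xt u' v) u i * deriv (fun v' => x u v') v i) = 0 ∧
      (∑ i : Fin 4, deriv (fun v' => xt u v') v i * deriv (fun u' => x u' v) u i) = 0 ∧
      (∑ i : Fin 4, deriv (fun v' => xt u v') v i * deriv (fun v' => x u v') v i) = 0 :=
  stmt_12_general α₁ α₂ β₁ β₂ tα1 tα2 nα1 nα2 tβ1 tβ2 nβ1 nβ2 κα κβ hα₁ hα₂ hβ₁ hβ₂ hκα hκβ hκαd
    hκβd hnα1 hnα2 hnβ1 hnβ2 hαorth hβorth x xt hx hxt
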